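/- Uniqueness of equilibrium: for n ≥ 4, if (A, B) is a pure-strategy Nash equilibrium of the dice game then A = B = S_n, the standard die. -/
import Mathlib


/-- An `n`-sided die: a multiset of `n` integers, each in `{1,…,n}`, summing to `n(n+1)/2`. -/
def IsDie (n : ℕ) (D : Multiset ℕ) : Prop :=
  Multiset.card D = n ∧ (∀ d ∈ D, 1 ≤ d ∧ d ≤ n) ∧ D.sum = n * (n + 1) / 2

/-- The standard die `[1,2,…,n]`. -/
def std (n : ℕ) : Multiset ℕ := (Multiset.range n).map (· + 1)

/-- Number of ordered pairs `(a,b)` with `a ∈ A`, `b ∈ B`, `a > b`. -/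
def wins (A B : Multiset ℕ) : ℕ :=
  Multiset.countP (fun p => p.2 < p.1) (A ×ˢ B)

/-- Number of ordered pairs `(a,b)` with `a ∈ A`, `b ∈ B`, `a = b`. -/
def ties (A B : Multiset ℕ) : ℕ :=
  Multiset.countP (fun p => p.1 = p.2) (A ×ˢ B)

/-- Payoff of `A` against `B`: `P(A > B) + (1/2) P(A = B)` under uniform independent rolls. -/
def payoff (n : ℕ) (A B : Multiset ℕ) : ℚ :=
  ((wins A B : ℚ) + (ties A B : ℚ) / 2) / (n ^ 2)

/-- `A` beats `B` if strictly more pairs favor `A` than favor `B`. -/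
def Beats (A B : Multiset ℕ) : Prop := wins B A < wins A B

section NUaux

open Multiset

private lemma nu_cntP_map {α β : Type} (f : α → β) (s : Multiset α)
    (p : β → Prop) [DecidablePred p] :
    countP p (s.map f) = s.countP (fun a => p (f a)) := by
  rw [countP_map, countP_eq_card_filter]

private lemma nu_countP_product (p : ℕ × ℕ → Prop) [DecidablePred p] (A B : Multiset ℕ) :
    countP p (A ×ˢ B) = (A.map fun a => B.countP fun b => p (a, b)).sum := by
  induction A using Multiset.induction with
  | empty => simp [zero_product]
  | cons a A ih =>
    rw [cons_product, countP_add, ih, map_cons, sum_cons, nu_cntP_map]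

/-- `2·wins + ties`, the integer payoff numerator. -/
private def nuFF (A B : Multiset ℕ) : ℕ := 2 * wins A B + ties A B

private lemma nuFF_eq (A B : Multiset ℕ) :
    nuFF A B
      = (A.map fun a => 2 * B.countP (fun b => b < a) + B.countP (fun b => a = b)).sum := by
  rw [nuFF, wins, ties, nu_countP_product, nu_countP_product, Multiset.sum_map_add,
    ← Multiset.sum_map_mul_left]

private lemma nu_countP_sum (B : Multiset ℕ) (p : ℕ → Prop) [DecidablePred p] :
    B.countP p = (B.map fun b => if p b then 1 else 0).sum := by
  induction B using Multiset.induction with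
  | empty => simp
  | cons b B ih => simp [countP_cons, ih, add_comm]

private lemma nu_sum_swap (A B : Multiset ℕ) (f : ℕ → ℕ → ℕ) :
    (A.map fun a => (B.map (f a)).sum).sum
      = (B.map fun b => (A.map fun a => f a b).sum).sum := by
  induction A using Multiset.induction with
  | empty => simp
  | cons a A ih =>
    simp only [map_cons, sum_cons, ih, Multiset.sum_map_add]

private lemma nu_sum_const (B : Multiset ℕ) (c : ℕ) :
    (B.map fun _ => c).sum = Multiset.card B * c := by
  induction B using Multiset.induction with
  | empty => simp
  | cons b B ih => simp [ih]; ring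

private lemma nu_sum_if2 (A : Multiset ℕ) (p : ℕ → Prop) [DecidablePred p] :
    (A.map fun a => if p a then 2 else 0).sum = 2 * A.countP p := by
  induction A using Multiset.induction with
  | empty => simp
  | cons a A ih => simp only [map_cons, sum_cons, countP_cons, ih]; split_ifs <;> omega

private lemma nu_sum_if1 (A : Multiset ℕ) (p : ℕ → Prop) [DecidablePred p] :
    (A.map fun a => if p a then 1 else 0).sum = A.countP p := by
  induction A using Multiset.induction with
  | empty => simp
  | cons a A ih => simp only [map_cons, sum_cons, countP_cons, ih]; split_ifs <;> omega

private lemma nuFF_eq2 (A B : Multiset ℕ) :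
    nuFF A B
      = (A.map fun a =>
          (B.map fun b => (if b < a then 2 else 0) + (if a = b then 1 else 0)).sum).sum := by
  rw [nuFF_eq]
  refine congrArg _ (map_congr rfl fun a _ => ?_)
  rw [Multiset.sum_map_add, nu_sum_if2 B (fun b => b < a), nu_sum_if1 B (fun b => a = b)]

private lemma nuFF_eq3 (A B : Multiset ℕ) :
    nuFF A B
      = (B.map fun b => 2 * A.countP (fun a => b < a) + A.countP (fun a => a = b)).sum := by
  rw [nuFF_eq2, nu_sum_swap]
  refine congrArg _ (map_congr rfl fun b _ => ?_)
  rw [Multiset.sum_map_add, nu_sum_if2 A (fun a => b < a), nu_sum_if1 A (fun a => a = b)]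

private lemma nuFF_add_nuFF (A B : Multiset ℕ) :
    nuFF A B + nuFF B A = 2 * Multiset.card A * Multiset.card B := by
  rw [nuFF_eq2 A B, nuFF_eq2 B A, nu_sum_swap B A, ← Multiset.sum_map_add]
  have h1 : (A.map fun a =>
      ((B.map fun b => (if b < a then 2 else 0) + (if a = b then 1 else 0)).sum +
       (B.map fun b => (if a < b then 2 else 0) + (if b = a then 1 else 0)).sum)).sum
      = (A.map fun _ => Multiset.card B * 2).sum := by
    refine congrArg _ (map_congr rfl fun a _ => ?_)
    rw [← Multiset.sum_map_add]
    have : (B.map fun b => ((if b < a then 2 else 0) + (if a = b then 1 else 0)) +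
        ((if a < b then 2 else 0) + (if b = a then 1 else 0))).sum
        = (B.map fun _ => 2).sum := by
      refine congrArg _ (map_congr rfl fun b _ => ?_)
      rcases lt_trichotomy a b with h | h | h <;> split_ifs <;> omega
    rw [this, nu_sum_const]
  rw [h1, nu_sum_const]
  ring

private lemma nu_std_succ (n : ℕ) : std (n + 1) = (n + 1) ::ₘ std n := by
  rw [std, std, Multiset.range_succ, Multiset.map_cons]

private lemma nu_card_std (n : ℕ) : Multiset.card (std n) = n := by simp [std]

private lemma nu_mem_std {n d : ℕ} : d ∈ std n ↔ 1 ≤ d ∧ d ≤ n := by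
  simp only [std, Multiset.mem_map, Multiset.mem_range]
  constructor
  · rintro ⟨k, hk, rfl⟩; omega
  · rintro ⟨h1, h2⟩; exact ⟨d - 1, by omega, by omega⟩

private lemma nu_sum_std (n : ℕ) : 2 * (std n).sum = n * (n + 1) := by
  induction n with
  | zero => simp [std]
  | succ n ih =>
    rw [nu_std_succ, Multiset.sum_cons]
    have e : (n + 1) * (n + 1 + 1) = n * (n + 1) + 2 * (n + 1) := by ring
    rw [e]
    generalize n * (n + 1) = a at ih ⊢
    omega

private lemma nu_isDie_std (n : ℕ) : IsDie n (std n) := by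
  refine ⟨nu_card_std n, fun d hd => nu_mem_std.mp hd, ?_⟩
  have h := nu_sum_std n
  obtain ⟨k, hk⟩ := Nat.even_mul_succ_self n
  rw [hk] at h ⊢
  omega

private lemma nu_count_std (n v : ℕ) :
    (std n).count v = if 1 ≤ v ∧ v ≤ n then 1 else 0 := by
  induction n with
  | zero =>
    simp only [std, Multiset.range_zero, Multiset.map_zero, Multiset.count_zero]
    rw [if_neg (by omega)]
  | succ n ih => rw [nu_std_succ, Multiset.count_cons, ih]; split_ifs <;> omega

private lemma nu_countP_range_le (n b : ℕ) :
    (range n).countP (fun k => b ≤ k) = n - b := by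
  induction n with
  | zero => simp
  | succ n ih => rw [Multiset.range_succ, countP_cons, ih]; split_ifs <;> omega

private lemma nu_countP_le_succ (s : Multiset ℕ) (m : ℕ) :
    s.countP (fun b => b ≤ m + 1)
      = s.countP (fun b => b ≤ m) + s.countP (fun b => m + 1 = b) := by
  induction s using Multiset.induction with
  | empty => simp
  | cons a s ih => simp only [countP_cons, ih]; split_ifs <;> omega

private lemma nu_countP_le_succ_count (s : Multiset ℕ) (m : ℕ) :
    s.countP (fun b => b ≤ m + 1)
      = s.countP (fun b => b ≤ m) + s.count (m + 1) := by
  induction s using Multiset.induction with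
  | empty => simp
  | cons a s ih =>
    simp only [countP_cons, Multiset.count_cons, ih]
    split_ifs <;> omega

private lemma nu_countP_lt_succ (s : Multiset ℕ) (m : ℕ) :
    s.countP (fun b => b < m + 1) = s.countP (fun b => b ≤ m) :=
  countP_congr rfl (fun x _ => by simp [Nat.lt_succ_iff])

private lemma nu_g (D : Multiset ℕ) (m : ℕ) :
    2 * D.countP (fun b => b < m + 1) + D.countP (fun b => m + 1 = b)
      = D.countP (fun b => b ≤ m) + D.countP (fun b => b ≤ m + 1) := by
  rw [nu_countP_lt_succ, nu_countP_le_succ]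
  omega

private lemma nu_std_countP_lt (n b : ℕ) :
    (std n).countP (fun a => b < a) = n - b := by
  rw [std, nu_cntP_map]
  have h : Multiset.countP (fun k => b < k + 1) (Multiset.range n)
      = Multiset.countP (fun k : ℕ => b ≤ k) (Multiset.range n) :=
    Multiset.countP_congr rfl (fun x _ => by simp [Nat.lt_succ_iff])
  rw [h, nu_countP_range_le]

private lemma nu_std_countP_eq (n b : ℕ) :
    (std n).countP (fun a => a = b) = if 1 ≤ b ∧ b ≤ n then 1 else 0 := by
  induction n with
  | zero =>
    simp only [std, Multiset.range_zero, Multiset.map_zero, Multiset.countP_zero]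
    rw [if_neg (by omega)]
  | succ n ih => rw [nu_std_succ, countP_cons, ih]; split_ifs <;> omega

private lemma nuFF_std (n : ℕ) (D : Multiset ℕ) (hE : ∀ d ∈ D, 1 ≤ d ∧ d ≤ n) :
    nuFF (std n) D + 2 * D.sum = Multiset.card D * (2 * n + 1) := by
  induction D using Multiset.induction with
  | empty => simp [nuFF, wins, ties, product_zero]
  | cons b D ih =>
    have hb := hE b (mem_cons_self _ _)
    have hD' := fun d hd => hE d (mem_cons_of_mem hd)
    have ih' := ih hD'
    have hcons : nuFF (std n) (b ::ₘ D)
        = (2 * (std n).countP (fun a => b < a) + (std n).countP (fun a => a = b))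
            + nuFF (std n) D := by
      rw [nuFF_eq3, map_cons, sum_cons, ← nuFF_eq3]
    rw [hcons, nu_std_countP_lt, nu_std_countP_eq, if_pos hb, Multiset.sum_cons,
      Multiset.card_cons]
    have hr : (Multiset.card D + 1) * (2 * n + 1)
        = Multiset.card D * (2 * n + 1) + (2 * n + 1) := by ring
    rw [hr]
    generalize Multiset.card D * (2 * n + 1) = C at ih' ⊢
    omega

private lemma nuFF_std_val (n : ℕ) (D : Multiset ℕ) (hD : IsDie n D) :
    nuFF (std n) D = n * n := by
  obtain ⟨hcard, hE, hsum⟩ := hD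
  have h1 := nuFF_std n D hE
  have h2 : 2 * D.sum = n * (n + 1) := by
    rw [hsum]
    obtain ⟨k, hk⟩ := Nat.even_mul_succ_self n
    rw [hk]
    omega
  rw [hcard, h2] at h1
  have hr : n * (2 * n + 1) = n * (n + 1) + n * n := by ring
  rw [hr] at h1
  generalize n * (n + 1) = a at h1
  generalize hb : n * n = b at h1 ⊢
  omega

private lemma nu_payoff_eq (n : ℕ) (hn : n ≠ 0) (A B : Multiset ℕ) :
    payoff n A B = (nuFF A B : ℚ) / (2 * (n : ℚ) ^ 2) := by
  rw [payoff, nuFF]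
  have hq : ((n : ℚ) ^ 2) ≠ 0 := by positivity
  push_cast
  field_simp

private lemma nu_payoff_std (n : ℕ) (hn : n ≠ 0) (D : Multiset ℕ) (hD : IsDie n D) :
    payoff n (std n) D = 1 / 2 := by
  rw [nu_payoff_eq n hn, nuFF_std_val n D hD]
  have hq : (n : ℚ) ≠ 0 := by exact_mod_cast hn
  push_cast
  field_simp

private lemma nu_payoff_total (n : ℕ) (hn : n ≠ 0) (A B : Multiset ℕ)
    (hA : IsDie n A) (hB : IsDie n B) : payoff n A B + payoff n B A = 1 := by
  rw [nu_payoff_eq n hn, nu_payoff_eq n hn]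
  have h := nuFF_add_nuFF A B
  rw [hA.1, hB.1] at h
  have hq : ((nuFF A B : ℚ)) + (nuFF B A : ℚ) = 2 * (n : ℚ) ^ 2 := by
    have : ((2 * n * n : ℕ) : ℚ) = 2 * (n : ℚ) ^ 2 := by push_cast; ring
    rw [← this]
    exact_mod_cast congrArg (Nat.cast : ℕ → ℚ) h
  have hq2 : (2 * (n : ℚ) ^ 2) ≠ 0 := by
    have : (n : ℚ) ≠ 0 := by exact_mod_cast hn
    positivity
  field_simp
  linarith

/-- The key rigidity lemma: if no "one-up-one-down" perturbation of the standard die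
gains against `D` (encoded via the CDF `S`), then the CDF is the standard one. -/
private lemma nu_key (n : ℕ) (hn : 4 ≤ n) (S : ℕ → ℤ)
    (h0 : S 0 = 0) (hSn : S n = n) (h01 : 0 ≤ S 1) (h12 : S 1 ≤ S 2)
    (hsum : 2 * (∑ k ∈ Finset.range n, S k) = (n : ℤ) * ((n : ℤ) - 1))
    (H : ∀ u v : ℕ, u + 2 ≤ n → v + 2 ≤ n → u ≠ v + 1 →
      S (u + 2) + S v ≤ S (v + 2) + S u) :
    ∀ m ≤ n, S m = m := by
  set c := S 2 with hc
  have hconst : ∀ u, u + 2 ≤ n → S (u + 2) = S u + c := by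
    intro u hu
    have hup : S 2 + S u ≤ S (u + 2) + S 0 := H 0 u (by omega) hu (by omega)
    by_cases h1 : u = 1
    · subst h1
      have hup' : S 2 + S 1 ≤ S 3 + S 0 := hup
      have hA : S 3 + S 2 ≤ S 4 + S 1 := H 1 2 (by omega) (by omega) (by omega)
      have hB : S 4 + S 0 ≤ S 2 + S 2 := H 2 0 (by omega) (by omega) (by omega)
      show S 3 = S 1 + c
      omega
    · have hdown : S (u + 2) + S 0 ≤ S 2 + S u := H u 0 hu (by omega) (by omega)
      omega
  have heven : ∀ t, 2 * t ≤ n → S (2 * t) = t * c := by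
    intro t
    induction t with
    | zero => intro _; simpa using h0
    | succ t ih =>
      intro h
      have e : 2 * (t + 1) = 2 * t + 2 := by ring
      rw [e, hconst (2 * t) (by omega), ih (by omega)]
      push_cast; ring
  have hodd : ∀ t, 2 * t + 1 ≤ n → S (2 * t + 1) = S 1 + t * c := by
    intro t
    induction t with
    | zero => intro _; simp
    | succ t ih =>
      intro h
      have e : 2 * (t + 1) + 1 = (2 * t + 1) + 2 := by ring
      rw [e, hconst (2 * t + 1) (by omega), ih (by omega)]
      push_cast; ring
  have hps : ∀ t, 2 * t ≤ n →
      (∑ k ∈ Finset.range (2 * t), S k) = t * S 1 + c * (t * ((t : ℤ) - 1)) := by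
    intro t
    induction t with
    | zero => intro _; simp
    | succ t ih =>
      intro h
      have e : 2 * (t + 1) = (2 * t + 1) + 1 := by ring
      rw [e, Finset.sum_range_succ, Finset.sum_range_succ, ih (by omega),
        heven t (by omega), hodd t (by omega)]
      push_cast; ring
  have hkey : c = 2 ∧ S 1 = 1 := by
    rcases Nat.even_or_odd n with ⟨M, hM⟩ | ⟨M, hM⟩
    · have hM2 : n = 2 * M := by omega
      have hMge : (2 : ℤ) ≤ (M : ℤ) := by
        have : 2 ≤ M := by omega
        exact_mod_cast this
      have hSn' : (M : ℤ) * c = 2 * (M : ℤ) := by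
        have h1 := heven M (by omega)
        rw [← hM2] at h1
        rw [hSn] at h1
        have : ((n : ℤ)) = 2 * (M : ℤ) := by exact_mod_cast congrArg (Nat.cast : ℕ → ℤ) hM2
        linarith [h1.symm, this]
      have hcc : c = 2 := by
        have hMne : (M : ℤ) ≠ 0 := by omega
        have : (M : ℤ) * c = (M : ℤ) * 2 := by linarith
        exact mul_left_cancel₀ hMne this
      have hps' := hps M (by omega)
      rw [← hM2] at hps'
      have hncast : ((n : ℤ)) = 2 * (M : ℤ) := by exact_mod_cast congrArg (Nat.cast : ℕ → ℤ) hM2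
      have hS1 : S 1 = 1 := by
        have h2 : (2 * (M : ℤ)) * S 1 = (2 * (M : ℤ)) * 1 := by
          rw [hcc] at hps'
          rw [hps', hncast] at hsum
          ring_nf at hsum ⊢
          nlinarith [hsum]
        have hMne : (2 * (M : ℤ)) ≠ 0 := by omega
        exact mul_left_cancel₀ hMne h2
      exact ⟨hcc, hS1⟩
    · have hM2 : n = 2 * M + 1 := hM
      have hMge : (2 : ℤ) ≤ (M : ℤ) := by
        have : 2 ≤ M := by omega
        exact_mod_cast this
      have hSn' : S 1 + (M : ℤ) * c = 2 * (M : ℤ) + 1 := by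
        have h1 := hodd M (by omega)
        rw [← hM2, hSn] at h1
        have : ((n : ℤ)) = 2 * (M : ℤ) + 1 := by exact_mod_cast congrArg (Nat.cast : ℕ → ℤ) hM2
        linarith [h1.symm, this]
      have hcc : c = 2 := by
        rcases le_or_gt c 1 with h | h
        · nlinarith
        · rcases le_or_gt c 2 with h' | h'
          · omega
          · nlinarith
      have hS1 : S 1 = 1 := by
        rw [hcc] at hSn'; linarith
      exact ⟨hcc, hS1⟩
  obtain ⟨hc2, hS1⟩ := hkey
  intro m hm
  rcases Nat.even_or_odd m with ⟨t, ht⟩ | ⟨t, ht⟩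
  · have e : m = 2 * t := by omega
    rw [e, heven t (by omega), hc2]
    push_cast [e]; ring
  · have e : m = 2 * t + 1 := ht
    rw [e, hodd t (by omega), hc2, hS1]
    push_cast [e]; ring

private lemma nu_eq_std (n : ℕ) (D : Multiset ℕ) (hD : IsDie n D)
    (hP : ∀ m ≤ n, D.countP (fun b => b ≤ m) = m) : D = std n := by
  rw [Multiset.ext]
  intro v
  rw [nu_count_std]
  match v with
  | 0 =>
    rw [if_neg (by omega)]
    rw [Multiset.count_eq_zero]
    intro h
    exact absurd (hD.2.1 0 h).1 (by omega)
  | (m + 1) =>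
    by_cases hv : m + 1 ≤ n
    · rw [if_pos ⟨by omega, hv⟩]
      have hsplit := nu_countP_le_succ_count D m
      rw [hP (m + 1) hv, hP m (by omega)] at hsplit
      omega
    · rw [if_neg (by omega)]
      rw [Multiset.count_eq_zero]
      intro h
      exact absurd (hD.2.1 (m + 1) h).2 (by omega)

private lemma nu_sum_ind (n b : ℕ) :
    (∑ k ∈ Finset.range n, (if b ≤ k then 1 else 0)) = n - b := by
  induction n with
  | zero => simp
  | succ n ih => rw [Finset.sum_range_succ, ih]; split_ifs <;> omega

private lemma nu_sumP (n : ℕ) (D : Multiset ℕ) (hE : ∀ d ∈ D, 1 ≤ d ∧ d ≤ n) :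
    (∑ k ∈ Finset.range n, D.countP (fun b => b ≤ k)) + D.sum = Multiset.card D * n := by
  induction D using Multiset.induction with
  | empty => simp
  | cons b D ih =>
    have hb := hE b (mem_cons_self _ _)
    have ih' := ih (fun d hd => hE d (mem_cons_of_mem hd))
    simp only [countP_cons, Multiset.sum_cons, Multiset.card_cons]
    rw [Finset.sum_add_distrib, nu_sum_ind n b]
    have hr : (Multiset.card D + 1) * n = Multiset.card D * n + n := by ring
    rw [hr]
    generalize Multiset.card D * n = C at ih' ⊢
    omega

private lemma nu_beat (n : ℕ) (hn : 4 ≤ n) (D : Multiset ℕ) (hD : IsDie n D)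
    (hne : D ≠ std n) : ∃ D', IsDie n D' ∧ 1 / 2 < payoff n D' D := by
  obtain ⟨hcard, hEl, hsm⟩ := hD
  have hP0 : D.countP (fun b => b ≤ 0) = 0 :=
    countP_eq_zero.mpr (fun d hd => by have := (hEl d hd).1; omega)
  have hPn : D.countP (fun b => b ≤ n) = n := by
    rw [countP_eq_card.mpr (fun d hd => (hEl d hd).2), hcard]
  have hPmono : ∀ k, D.countP (fun b => b ≤ k) ≤ D.countP (fun b => b ≤ k + 1) := by
    intro k
    rw [nu_countP_le_succ]
    exact Nat.le_add_right _ _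
  have h2sum : 2 * D.sum = n * (n + 1) := by
    rw [hsm]
    obtain ⟨k, hk⟩ := Nat.even_mul_succ_self n
    rw [hk]
    omega
  have hsumP := nu_sumP n D hEl
  rw [hcard] at hsumP
  set S : ℕ → ℤ := fun k => (D.countP (fun b => b ≤ k) : ℤ) with hSdef
  have hS0 : S 0 = 0 := by simp only [hSdef]; exact_mod_cast hP0
  have hSn : S n = n := by simp only [hSdef]; exact_mod_cast hPn
  have hS01 : 0 ≤ S 1 := by simp only [hSdef]; exact Int.natCast_nonneg _
  have hS12 : S 1 ≤ S 2 := by simp only [hSdef]; exact_mod_cast hPmono 1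
  have hSsum : 2 * (∑ k ∈ Finset.range n, S k) = (n : ℤ) * ((n : ℤ) - 1) := by
    have hcast : (∑ k ∈ Finset.range n, S k)
        = ((∑ k ∈ Finset.range n, D.countP (fun b => b ≤ k) : ℕ) : ℤ) := by
      push_cast [hSdef]; rfl
    rw [hcast]
    have h1 : 2 * (∑ k ∈ Finset.range n, D.countP (fun b => b ≤ k)) + n * (n + 1)
        = 2 * (n * n) := by
      linarith [hsumP, h2sum]
    have := congrArg (Nat.cast : ℕ → ℤ) h1
    push_cast at this
    ring_nf at this ⊢
    linarith
  have hnotall : ¬ (∀ m ≤ n, S m = m) := by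
    intro hall
    apply hne
    apply nu_eq_std n D ⟨hcard, hEl, hsm⟩
    intro m hm
    have h := hall m hm
    simp only [hSdef] at h
    exact_mod_cast h
  have hnotH : ¬ (∀ u v : ℕ, u + 2 ≤ n → v + 2 ≤ n → u ≠ v + 1 →
      S (u + 2) + S v ≤ S (v + 2) + S u) := by
    intro H
    exact hnotall (nu_key n hn S hS0 hSn hS01 hS12 hSsum H)
  push_neg at hnotH
  obtain ⟨u, v, hu, hv, huv, hlt⟩ := hnotH
  have hlt' : D.countP (fun b => b ≤ v + 2) + D.countP (fun b => b ≤ u)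
      < D.countP (fun b => b ≤ u + 2) + D.countP (fun b => b ≤ v) := by
    have : S (v + 2) + S u < S (u + 2) + S v := hlt
    simp only [hSdef] at this
    exact_mod_cast this
  -- construct the beating die
  have m1 : (u + 1) ∈ std n := nu_mem_std.mpr ⟨by omega, by omega⟩
  have m2 : (v + 2) ∈ (std n).erase (u + 1) :=
    (mem_erase_of_ne (by omega)).mpr (nu_mem_std.mpr ⟨by omega, by omega⟩)
  set E : Multiset ℕ := ((std n).erase (u + 1)).erase (v + 2) with hEdef
  have hsplit : (u + 1) ::ₘ (v + 2) ::ₘ E = std n := by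
    rw [hEdef, cons_erase m2, cons_erase m1]
  set D' : Multiset ℕ := (u + 2) ::ₘ (v + 1) ::ₘ E with hD'def
  have hstdDie := nu_isDie_std n
  have hcardE : Multiset.card E + 2 = n := by
    have := congrArg Multiset.card hsplit
    simp only [Multiset.card_cons, nu_card_std] at this
    omega
  have hD'die : IsDie n D' := by
    refine ⟨?_, ?_, ?_⟩
    · simp only [hD'def, Multiset.card_cons]; omega
    · intro d hd
      simp only [hD'def, Multiset.mem_cons] at hd
      rcases hd with rfl | rfl | hd
      · omega
      · omega
      · have : d ∈ std n := mem_of_mem_erase (mem_of_mem_erase hd)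
        exact nu_mem_std.mp this
    · have h1 : (std n).sum = (u + 1) + ((v + 2) + E.sum) := by
        rw [← hsplit, Multiset.sum_cons, Multiset.sum_cons]
      have h2 : D'.sum = (u + 2) + ((v + 1) + E.sum) := by
        rw [hD'def, Multiset.sum_cons, Multiset.sum_cons]
      have h3 := hstdDie.2.2
      omega
  refine ⟨D', hD'die, ?_⟩
  -- payoff computation
  have hFFstd : nuFF (std n) D = n * n := nuFF_std_val n D ⟨hcard, hEl, hsm⟩
  set g : ℕ → ℕ := fun a => 2 * D.countP (fun b => b < a) + D.countP (fun b => a = b)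
    with hgdef
  have hgval : ∀ m : ℕ, g (m + 1) = D.countP (fun b => b ≤ m) + D.countP (fun b => b ≤ m + 1) :=
    fun m => nu_g D m
  have hFFD' : nuFF D' D = g (u + 2) + (g (v + 1) + (E.map g).sum) := by
    rw [nuFF_eq, hD'def, Multiset.map_cons, Multiset.map_cons, Multiset.sum_cons,
      Multiset.sum_cons]
  have hFFs : nuFF (std n) D = g (u + 1) + (g (v + 2) + (E.map g).sum) := by
    rw [nuFF_eq, ← hsplit, Multiset.map_cons, Multiset.map_cons, Multiset.sum_cons,
      Multiset.sum_cons]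
  have hgt : n * n < nuFF D' D := by
    rw [← hFFstd, hFFs, hFFD']
    have e1 : g (u + 2) = D.countP (fun b => b ≤ u + 1) + D.countP (fun b => b ≤ u + 2) :=
      hgval (u + 1)
    have e2 : g (v + 1) = D.countP (fun b => b ≤ v) + D.countP (fun b => b ≤ v + 1) :=
      hgval v
    have e3 : g (u + 1) = D.countP (fun b => b ≤ u) + D.countP (fun b => b ≤ u + 1) :=
      hgval u
    have e4 : g (v + 2) = D.countP (fun b => b ≤ v + 1) + D.countP (fun b => b ≤ v + 2) :=
      hgval (v + 1)
    omega
  rw [nu_payoff_eq n (by omega) D' D]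
  have hpos : (0 : ℚ) < 2 * (n : ℚ) ^ 2 := by
    have : (0 : ℚ) < (n : ℚ) := by exact_mod_cast (by omega : 0 < n)
    positivity
  rw [lt_div_iff₀ hpos]
  have hcast : ((n * n : ℕ) : ℚ) < (nuFF D' D : ℚ) := by exact_mod_cast hgt
  push_cast at hcast ⊢
  nlinarith [hcast]

end NUaux

/-- Uniqueness: for `n ≥ 4`, any pure-strategy Nash equilibrium `(A, B)` has
`A = B = Sₙ`. -/
theorem nash_unique (n : ℕ) (hn : 4 ≤ n) (A B : Multiset ℕ)
    (hA : IsDie n A) (hB : IsDie n B)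
    (hNashA : ∀ A' : Multiset ℕ, IsDie n A' → payoff n A' B ≤ payoff n A B)
    (hNashB : ∀ B' : Multiset ℕ, IsDie n B' → payoff n B' A ≤ payoff n B A) :
    A = std n ∧ B = std n := by
  have hn0 : n ≠ 0 := by omega
  have hstdDie := nu_isDie_std n
  have h1 : payoff n (std n) B = 1 / 2 := nu_payoff_std n hn0 B hB
  have h2 : payoff n (std n) A = 1 / 2 := nu_payoff_std n hn0 A hA
  have hAB : 1 / 2 ≤ payoff n A B := h1 ▸ hNashA (std n) hstdDie
  have hBA : 1 / 2 ≤ payoff n B A := h2 ▸ hNashB (std n) hstdDie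
  have htot : payoff n A B + payoff n B A = 1 := nu_payoff_total n hn0 A B hA hB
  have hAB' : payoff n A B = 1 / 2 := by linarith
  have hBA' : payoff n B A = 1 / 2 := by linarith
  constructor
  · by_contra hA'
    obtain ⟨D', hD', hgt⟩ := nu_beat n hn A hA hA'
    have := hNashB D' hD'
    rw [hBA'] at this
    linarith
  · by_contra hB'
    obtain ⟨D', hD', hgt⟩ := nu_beat n hn B hB hB'
    have := hNashA D' hD'
    rw [hAB'] at this
    linarith
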